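/- In any run of the global machine satisfying the reception axiom (property 5: an automaton can perform ā at step i only if a ∈ E_i or some automaton performs a at step i) together with the environment recurrence (E 1 = ∅, E_{i+1} = (E_i ∪ Sent_i) \ Delivered_i), every reaction is causally justified: if σ^i_j = ā then there exists l ≤ i and k with σ^l_k = a. -/

import Mathlib

theorem exists_lt_mem_sent_of_mem_env {Msg : Type*} {E Sent : ℕ → Set Msg} (h1 : E 1 = ∅)
    (hstep : ∀ i, 1 ≤ i → E (i + 1) ⊆ E i ∪ Sent i) {i : ℕ} (hi : 1 ≤ i) {a : Msg}
    (ha : a ∈ E i) : ∃ l < i, a ∈ Sent l := by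
  induction i, hi using Nat.le_induction with
  | base => simp [h1] at ha
  | succ n hn ih =>
    rcases hstep n hn ha with hE | hsent
    · obtain ⟨l, hl, hl_sent⟩ := ih hE
      exact ⟨l, hl.trans (Nat.lt_succ_self n), hl_sent⟩
    · exact ⟨n, Nat.lt_succ_self n, hsent⟩

/-- in any run satisfying the reception axiom (a reaction `ā` can
be performed at step `i ≥ 1` only if `a ∈ E i` or some automaton broadcasts `a`
at step `i`) together with the environment recurrence (`E 1 = ∅`,
`E (i+1) = (E i ∪ Sent i) \ Delivered i` with
`Sent i = {a | ∃ j, σ i j = some (br a)}`), every reaction is causally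
justified: if `σ i j = some (re a)` then some automaton broadcast `a` at some
step `l ≤ i`. -/
theorem stmt_18 {A Msg J : Type*} (br re : Msg → A)
    (σ : ℕ → J → Option A) (E Delivered : ℕ → Set Msg)
    (h1 : E 1 = ∅)
    (hrec : ∀ i, 1 ≤ i →
      E (i + 1) = (E i ∪ {a : Msg | ∃ j, σ i j = some (br a)}) \ Delivered i)
    (hrecv : ∀ (a : Msg) (i : ℕ) (j : J), 1 ≤ i → σ i j = some (re a) →
      a ∈ E i ∨ ∃ k, σ i k = some (br a)) :
    ∀ (a : Msg) (i : ℕ) (j : J), 1 ≤ i → σ i j = some (re a) →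
      ∃ l, l ≤ i ∧ ∃ k, σ l k = some (br a) := by
  intro a i j hi hre
  rcases hrecv a i j hi hre with hE | ⟨k, hk⟩
  · obtain ⟨l, hl, k, hk⟩ := exists_lt_mem_sent_of_mem_env h1
      (fun n hn => (hrec n hn).trans_subset Set.sdiff_subset) hi hE
    exact ⟨l, hl.le, k, hk⟩
  · exact ⟨i, le_rfl, k, hk⟩
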